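/- If the pair (X₁,Y₁) is independent of the pair (X₂,Y₂), then 𝓘_{X₁,Y₁} + 𝓘_{X₂,Y₂} ⊆ 𝓘_{(X₁,X₂),(Y₁,Y₂)}, where + denotes the Minkowski sum. Consequently, if (X₁,Y₁),…,(Xₙ,Yₙ) are i.i.d. with common joint pmf p_{XY}, then 𝓘_{XY} ⊆ (1/n)·𝓘_{Xⁿ,Yⁿ}. -/

import Mathlib

/-!
If `U₁` is an auxiliary variable for `(X₁, Y₁)` and `U₂` one for `(X₂, Y₂)`, drawn independently
given the sources, then `U = (U₁, U₂)` is an auxiliary variable for `((X₁, X₂), (Y₁, Y₂))` under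
which the triples `(X₁, Y₁, U₁)` and `(X₂, Y₂, U₂)` are independent. Entropy is additive over
independent coordinates, so each of `I(X;U)`, `I(Y;U)`, `I(XY;U)` is the sum of the two
corresponding quantities. The same product construction over `n` i.i.d. copies shows
`n • 𝓘_{XY} ⊆ 𝓘_{Xⁿ,Yⁿ}`.
-/

open scoped BigOperators Pointwise Classical

noncomputable section

namespace GW

/-- A probability mass function on a finite type. -/
def IsPMF {α : Type} [Fintype α] (p : α → ℝ) : Prop :=
  (∀ a, 0 ≤ p a) ∧ ∑ a, p a = 1

/-- Distribution (pmf) of the random variable `f` under the pmf `p`. -/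
def dist {α β : Type} [Fintype α] (p : α → ℝ) (f : α → β) : β → ℝ :=
  fun b => ∑ a, if f a = b then p a else 0

/-- Shannon entropy (base 2) of the random variable `f` under the pmf `p`. -/
def H {α β : Type} [Fintype α] [Fintype β] (p : α → ℝ) (f : α → β) : ℝ :=
  ∑ b, -(dist p f b * Real.logb 2 (dist p f b))

/-- Mutual information `I(f; g)` under `p`. -/
def I2 {α β γ : Type} [Fintype α] [Fintype β] [Fintype γ]
    (p : α → ℝ) (f : α → β) (g : α → γ) : ℝ :=
  H p f + H p g - H p (fun a => (f a, g a))

/-- Conditional entropy `H(f | g)` under `p`. -/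
def Hc {α β γ : Type} [Fintype α] [Fintype β] [Fintype γ]
    (p : α → ℝ) (f : α → β) (g : α → γ) : ℝ :=
  H p (fun a => (f a, g a)) - H p g

/-- Conditional mutual information `I(f; g | h)` under `p`. -/
def Ic {α β γ δ : Type} [Fintype α] [Fintype β] [Fintype γ] [Fintype δ]
    (p : α → ℝ) (f : α → β) (g : α → γ) (h : α → δ) : ℝ :=
  Hc p f h + Hc p g h - Hc p (fun a => (f a, g a)) h

/-- Independence of the random variables `f` and `g` under `p`. -/
def Indep {α β γ : Type} [Fintype α] (p : α → ℝ) (f : α → β) (g : α → γ) : Prop :=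
  ∀ b c, dist p (fun a => (f a, g a)) (b, c) = dist p f b * dist p g c

/-- `q` is a joint pmf on `X × Y × U` whose `(X,Y)`-marginal is `p`; i.e. `U` is an
auxiliary random variable defined jointly with `(X,Y)` via a conditional pmf `p_{U|XY}`. -/
def IsAux {X Y U : Type} [Fintype X] [Fintype Y] [Fintype U]
    (p : X × Y → ℝ) (q : X × Y × U → ℝ) : Prop :=
  IsPMF q ∧ ∀ x y, (∑ u, q (x, y, u)) = p (x, y)

/-- Coordinate map onto `X`. -/
def cX {X Y U : Type} : X × Y × U → X := fun a => a.1
/-- Coordinate map onto `Y`. -/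
def cY {X Y U : Type} : X × Y × U → Y := fun a => a.2.1
/-- Coordinate map onto `U`. -/
def cU {X Y U : Type} : X × Y × U → U := fun a => a.2.2
/-- Coordinate map onto `X × Y`. -/
def cXY {X Y U : Type} : X × Y × U → X × Y := fun a => (a.1, a.2.1)

/-- The mutual information region `𝓘_{XY}`. -/
def MIRegion {X Y : Type} [Fintype X] [Fintype Y] (p : X × Y → ℝ) : Set (ℝ × ℝ × ℝ) :=
  { v | ∃ (U : Type) (_ : Fintype U) (q : X × Y × U → ℝ), IsAux p q ∧
      v = (I2 q cX cU, I2 q cY cU, I2 q cXY cU) }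

/-- The outer region `𝓘ᵒ_{XY}`. -/
def OuterRegion {X Y : Type} [Fintype X] [Fintype Y] (p : X × Y → ℝ) : Set (ℝ × ℝ × ℝ) :=
  { v | 0 ≤ v.1 ∧ 0 ≤ v.2.1 ∧ v.1 + v.2.1 - v.2.2 ≤ I2 p Prod.fst Prod.snd ∧
        0 ≤ v.2.2 - v.2.1 ∧ v.2.2 - v.2.1 ≤ Hc p Prod.fst Prod.snd ∧
        0 ≤ v.2.2 - v.1 ∧ v.2.2 - v.1 ≤ Hc p Prod.snd Prod.fst }

/-- Maximal interaction information `G_NNI(X; Y)`. -/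
def GNNI {X Y : Type} [Fintype X] [Fintype Y] (p : X × Y → ℝ) : ℝ :=
  sSup { r | ∃ (U : Type) (_ : Fintype U) (q : X × Y × U → ℝ), IsAux p q ∧
      r = Ic q cX cY cU - I2 p Prod.fst Prod.snd }

/-- Asymmetric private interaction information `G_PNI(X → Y)`. -/
def GPNI {X Y : Type} [Fintype X] [Fintype Y] (p : X × Y → ℝ) : ℝ :=
  sSup { r | ∃ (U : Type) (_ : Fintype U) (q : X × Y × U → ℝ), IsAux p q ∧
      Indep q cU cX ∧ r = Ic q cX cY cU - I2 p Prod.fst Prod.snd }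

/-- Symmetric private interaction information `G_PPI(X; Y)`. -/
def GPPI {X Y : Type} [Fintype X] [Fintype Y] (p : X × Y → ℝ) : ℝ :=
  sSup { r | ∃ (U : Type) (_ : Fintype U) (q : X × Y × U → ℝ), IsAux p q ∧
      Indep q cU cX ∧ Indep q cU cY ∧ r = Ic q cX cY cU - I2 p Prod.fst Prod.snd }

lemma neg_mul_logb_mul (x y : ℝ) :
    -(x * y * Real.logb 2 (x * y)) = -(x * Real.logb 2 x) * y + x * -(y * Real.logb 2 y) := by
  rcases eq_or_ne x 0 with rfl | hx
  · simp
  rcases eq_or_ne y 0 with rfl | hy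
  · simp
  rw [Real.logb_mul hx hy]
  ring

lemma neg_prod_mul_logb_prod {ι : Type} [Fintype ι] (x : ι → ℝ) :
    -((∏ i, x i) * Real.logb 2 (∏ i, x i)) = ∑ j, (∏ i, x i) * -Real.logb 2 (x j) := by
  by_cases hx : ∀ i, x i ≠ 0
  · rw [Real.logb_prod _ _ fun i _ => hx i, Finset.mul_sum, ← Finset.sum_neg_distrib]
    simp only [mul_neg]
  · push Not at hx
    obtain ⟨i, hi⟩ := hx
    simp [Finset.prod_eq_zero (Finset.mem_univ i) hi]

section Entropy

variable {α β γ : Type} [Fintype α] [Fintype β] [Fintype γ]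

def entropy (d : β → ℝ) : ℝ :=
  ∑ b, -(d b * Real.logb 2 (d b))

lemma H_eq_entropy (p : α → ℝ) (f : α → β) : H p f = entropy (dist p f) := rfl

lemma sum_dist (p : α → ℝ) (f : α → β) : ∑ b, dist p f b = ∑ a, p a := by
  unfold dist
  rw [Finset.sum_comm]
  simp

lemma H_comp_equiv {α' : Type} [Fintype α'] (p : α → ℝ) (f : α → β) (e : α' ≃ α) :
    H (fun a => p (e a)) (fun a => f (e a)) = H p f := by
  have hd : dist (fun a => p (e a)) (fun a => f (e a)) = dist p f :=
    funext fun b => e.sum_comp fun a => if f a = b then p a else 0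
  rw [H_eq_entropy, hd, H_eq_entropy]

lemma H_comp_of_injective (p : α → ℝ) (f : α → β) {e : β → γ} (he : e.Injective) :
    H p (fun a => e (f a)) = H p f := by
  have hd : ∀ b, dist p (fun a => e (f a)) (e b) = dist p f b := fun b => by
    simp only [dist, he.eq_iff]
  have hz : ∀ c ∉ Set.range e, dist p (fun a => e (f a)) c = 0 := fun c hc =>
    Finset.sum_eq_zero fun a _ => if_neg fun h => hc ⟨f a, h⟩
  refine (Fintype.sum_of_injective e he _ _ (fun c hc => ?_) fun b => ?_).symm
  · simp [hz c hc]
  · rw [hd]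

lemma I2_comp_equiv {α' : Type} [Fintype α'] (p : α → ℝ) (f : α → β) (g : α → γ) (e : α' ≃ α) :
    I2 (fun a => p (e a)) (fun a => f (e a)) (fun a => g (e a)) = I2 p f g := by
  unfold I2
  rw [H_comp_equiv p f e, H_comp_equiv p g e, ← H_comp_equiv p (fun a => (f a, g a)) e]

lemma I2_comp_left_of_injective {β' : Type} [Fintype β'] (p : α → ℝ) (f : α → β) (g : α → γ)
    {e : β → β'} (he : e.Injective) :
    I2 p (fun a => e (f a)) g = I2 p f g := by
  have he' : (Prod.map e id : β × γ → β' × γ).Injective := he.prodMap Function.injective_id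
  unfold I2
  rw [H_comp_of_injective p f he, ← H_comp_of_injective p (fun a => (f a, g a)) he']
  rfl

end Entropy

section Product

variable {α₁ α₂ β₁ β₂ γ₁ γ₂ : Type} [Fintype α₁] [Fintype α₂]

lemma dist_mul (p₁ : α₁ → ℝ) (p₂ : α₂ → ℝ) (f₁ : α₁ → β₁) (f₂ : α₂ → β₂) (b : β₁ × β₂) :
    dist (fun a : α₁ × α₂ => p₁ a.1 * p₂ a.2) (fun a => (f₁ a.1, f₂ a.2)) b
      = dist p₁ f₁ b.1 * dist p₂ f₂ b.2 := by
  simp only [dist, Fintype.sum_prod_type, Finset.sum_mul_sum, Prod.ext_iff, ite_zero_mul_ite_zero,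
    ite_and]

variable [Fintype β₁] [Fintype β₂] [Fintype γ₁] [Fintype γ₂]

lemma entropy_mul {d₁ : β₁ → ℝ} {d₂ : β₂ → ℝ} (h₁ : ∑ b, d₁ b = 1) (h₂ : ∑ b, d₂ b = 1) :
    entropy (fun b : β₁ × β₂ => d₁ b.1 * d₂ b.2) = entropy d₁ + entropy d₂ := by
  simp only [entropy, Fintype.sum_prod_type, neg_mul_logb_mul, Finset.sum_add_distrib,
    ← Finset.mul_sum, ← Finset.sum_mul, h₁, h₂, mul_one, one_mul]

lemma H_mul {p₁ : α₁ → ℝ} {p₂ : α₂ → ℝ} (h₁ : ∑ a, p₁ a = 1) (h₂ : ∑ a, p₂ a = 1)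
    (f₁ : α₁ → β₁) (f₂ : α₂ → β₂) :
    H (fun a : α₁ × α₂ => p₁ a.1 * p₂ a.2) (fun a => (f₁ a.1, f₂ a.2)) = H p₁ f₁ + H p₂ f₂ := by
  rw [H_eq_entropy, funext (dist_mul p₁ p₂ f₁ f₂)]
  exact entropy_mul (by rw [sum_dist, h₁]) (by rw [sum_dist, h₂])

lemma I2_mul {p₁ : α₁ → ℝ} {p₂ : α₂ → ℝ} (h₁ : ∑ a, p₁ a = 1) (h₂ : ∑ a, p₂ a = 1)
    (f₁ : α₁ → β₁) (f₂ : α₂ → β₂) (g₁ : α₁ → γ₁) (g₂ : α₂ → γ₂) :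
    I2 (fun a : α₁ × α₂ => p₁ a.1 * p₂ a.2) (fun a => (f₁ a.1, f₂ a.2)) (fun a => (g₁ a.1, g₂ a.2))
      = I2 p₁ f₁ g₁ + I2 p₂ f₂ g₂ := by
  have hjoint : H (fun a : α₁ × α₂ => p₁ a.1 * p₂ a.2)
      (fun a => ((f₁ a.1, f₂ a.2), (g₁ a.1, g₂ a.2)))
      = H p₁ (fun a => (f₁ a, g₁ a)) + H p₂ (fun a => (f₂ a, g₂ a)) := by
    rw [← H_mul h₁ h₂, ← H_comp_of_injective _ _ (Equiv.prodProdProdComm β₁ γ₁ β₂ γ₂).injective]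
    rfl
  simp only [I2, H_mul h₁ h₂, hjoint]
  ring

end Product

section Pi

variable {ι : Type} [Fintype ι] [DecidableEq ι] {α β γ : ι → Type} [∀ i, Fintype (α i)]

lemma dist_pi (p : ∀ i, α i → ℝ) (f : ∀ i, α i → β i) (b : ∀ i, β i) :
    dist (fun a : ∀ i, α i => ∏ i, p i (a i)) (fun a i => f i (a i)) b
      = ∏ i, dist (p i) (f i) (b i) := by
  simp only [dist, Fintype.prod_sum, Fintype.prod_ite_zero, funext_iff]

variable [∀ i, Fintype (β i)] [∀ i, Fintype (γ i)]

lemma sum_prod_mul_apply {d : ∀ i, β i → ℝ} (hd : ∀ i, ∑ c, d i c = 1) (φ : ∀ i, β i → ℝ) (j : ι) :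
    ∑ b : ∀ i, β i, (∏ i, d i (b i)) * φ j (b j) = ∑ c, d j c * φ j c := by
  have hsplit : ∀ b : ∀ i, β i,
      (∏ i, d i (b i)) * φ j (b j) = ∏ i, d i (b i) * (if i = j then φ i (b i) else 1) := by
    intro b
    rw [Finset.prod_mul_distrib, Finset.prod_ite_eq']
    simp
  have hfactor : ∀ i, ∑ c, d i c * (if i = j then φ i c else 1)
      = if i = j then ∑ c, d i c * φ i c else 1 := by
    intro i
    split_ifs <;> simp [hd]
  rw [Finset.sum_congr rfl fun b _ => hsplit b,
    ← Fintype.prod_sum fun i c => d i c * (if i = j then φ i c else 1)]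
  simp only [hfactor, Finset.prod_ite_eq', Finset.mem_univ, if_true]

lemma entropy_pi {d : ∀ i, β i → ℝ} (hd : ∀ i, ∑ c, d i c = 1) :
    entropy (fun b : ∀ i, β i => ∏ i, d i (b i)) = ∑ i, entropy (d i) := by
  simp only [entropy, neg_prod_mul_logb_prod]
  rw [Finset.sum_comm]
  refine Finset.sum_congr rfl fun j _ => ?_
  rw [sum_prod_mul_apply hd (fun i c => -Real.logb 2 (d i c)) j]
  simp only [mul_neg]

lemma H_pi {p : ∀ i, α i → ℝ} (hp : ∀ i, ∑ a, p i a = 1) (f : ∀ i, α i → β i) :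
    H (fun a : ∀ i, α i => ∏ i, p i (a i)) (fun a i => f i (a i)) = ∑ i, H (p i) (f i) := by
  rw [H_eq_entropy, funext (dist_pi p f)]
  exact entropy_pi fun i => by rw [sum_dist, hp i]

lemma I2_pi {p : ∀ i, α i → ℝ} (hp : ∀ i, ∑ a, p i a = 1)
    (f : ∀ i, α i → β i) (g : ∀ i, α i → γ i) :
    I2 (fun a : ∀ i, α i => ∏ i, p i (a i)) (fun a i => f i (a i)) (fun a i => g i (a i))
      = ∑ i, I2 (p i) (f i) (g i) := by
  have hjoint : H (fun a : ∀ i, α i => ∏ i, p i (a i))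
      (fun a => ((fun i => f i (a i)), (fun i => g i (a i))))
      = ∑ i, H (p i) (fun a => (f i a, g i a)) := by
    rw [← H_pi hp, ← H_comp_of_injective _ _ (Equiv.arrowProdEquivProdArrow ι β γ).injective]
    rfl
  simp only [I2, H_pi hp, hjoint, Finset.sum_add_distrib, Finset.sum_sub_distrib]

end Pi

section MIRegionMul

variable {X₁ Y₁ U₁ X₂ Y₂ U₂ : Type}

def tripleProdEquiv : (X₁ × X₂) × (Y₁ × Y₂) × (U₁ × U₂) ≃ (X₁ × Y₁ × U₁) × (X₂ × Y₂ × U₂) where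
  toFun a := ((a.1.1, a.2.1.1, a.2.2.1), (a.1.2, a.2.1.2, a.2.2.2))
  invFun b := ((b.1.1, b.2.1), (b.1.2.1, b.2.2.1), (b.1.2.2, b.2.2.2))
  left_inv _ := rfl
  right_inv _ := rfl

def auxMul (q₁ : X₁ × Y₁ × U₁ → ℝ) (q₂ : X₂ × Y₂ × U₂ → ℝ)
    (a : (X₁ × X₂) × (Y₁ × Y₂) × (U₁ × U₂)) : ℝ :=
  q₁ (tripleProdEquiv a).1 * q₂ (tripleProdEquiv a).2

variable [Fintype X₁] [Fintype Y₁] [Fintype U₁] [Fintype X₂] [Fintype Y₂] [Fintype U₂]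

lemma IsAux.mul {p₁ : X₁ × Y₁ → ℝ} {p₂ : X₂ × Y₂ → ℝ} {q₁ : X₁ × Y₁ × U₁ → ℝ}
    {q₂ : X₂ × Y₂ × U₂ → ℝ} (h₁ : IsAux p₁ q₁) (h₂ : IsAux p₂ q₂) :
    IsAux (fun a : (X₁ × X₂) × (Y₁ × Y₂) => p₁ (a.1.1, a.2.1) * p₂ (a.1.2, a.2.2))
      (auxMul q₁ q₂) := by
  obtain ⟨⟨hq₁, hs₁⟩, hm₁⟩ := h₁
  obtain ⟨⟨hq₂, hs₂⟩, hm₂⟩ := h₂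
  refine ⟨⟨fun a => mul_nonneg (hq₁ _) (hq₂ _), ?_⟩, fun x y => ?_⟩
  · calc ∑ a, auxMul q₁ q₂ a = ∑ b : (X₁ × Y₁ × U₁) × (X₂ × Y₂ × U₂), q₁ b.1 * q₂ b.2 :=
          tripleProdEquiv.sum_comp fun b => q₁ b.1 * q₂ b.2
      _ = (∑ a, q₁ a) * ∑ a, q₂ a := by rw [Fintype.sum_prod_type, Finset.sum_mul_sum]
      _ = 1 := by rw [hs₁, hs₂, mul_one]
  · calc ∑ u, auxMul q₁ q₂ (x, y, u) = (∑ u, q₁ (x.1, y.1, u)) * ∑ u, q₂ (x.2, y.2, u) := by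
          rw [Finset.sum_mul_sum, Fintype.sum_prod_type]
          rfl
      _ = p₁ (x.1, y.1) * p₂ (x.2, y.2) := by rw [hm₁, hm₂]

lemma I2_auxMul {q₁ : X₁ × Y₁ × U₁ → ℝ} {q₂ : X₂ × Y₂ × U₂ → ℝ}
    (h₁ : ∑ a, q₁ a = 1) (h₂ : ∑ a, q₂ a = 1) {β₁ β₂ : Type} [Fintype β₁] [Fintype β₂]
    (f₁ : X₁ × Y₁ × U₁ → β₁) (f₂ : X₂ × Y₂ × U₂ → β₂) :
    I2 (auxMul q₁ q₂) (fun a => (f₁ (tripleProdEquiv a).1, f₂ (tripleProdEquiv a).2)) cU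
      = I2 q₁ f₁ cU + I2 q₂ f₂ cU := by
  rw [← I2_mul h₁ h₂, ← I2_comp_equiv _ _ _ tripleProdEquiv]
  rfl

lemma add_mem_MIRegion_mul {p₁ : X₁ × Y₁ → ℝ} {p₂ : X₂ × Y₂ → ℝ} {v₁ v₂ : ℝ × ℝ × ℝ}
    (hv₁ : v₁ ∈ MIRegion p₁) (hv₂ : v₂ ∈ MIRegion p₂) :
    v₁ + v₂ ∈
      MIRegion (fun a : (X₁ × X₂) × (Y₁ × Y₂) => p₁ (a.1.1, a.2.1) * p₂ (a.1.2, a.2.2)) := by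
  obtain ⟨U₁, _, q₁, hq₁, rfl⟩ := hv₁
  obtain ⟨U₂, _, q₂, hq₂, rfl⟩ := hv₂
  -- `cXY` of the product source is `((x₁, x₂), (y₁, y₂))`, a reordering of `((x₁, y₁), (x₂, y₂))`.
  have hXY : I2 (auxMul q₁ q₂) cXY cU = I2 q₁ cXY cU + I2 q₂ cXY cU := by
    rw [← I2_auxMul hq₁.1.2 hq₂.1.2, ← I2_comp_left_of_injective _ _ _
      (Equiv.prodProdProdComm X₁ Y₁ X₂ Y₂).injective]
    rfl
  refine ⟨U₁ × U₂, inferInstance, auxMul q₁ q₂, hq₁.mul hq₂, ?_⟩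
  have hX : I2 (auxMul q₁ q₂) cX cU = I2 q₁ cX cU + I2 q₂ cX cU :=
    I2_auxMul hq₁.1.2 hq₂.1.2 cX cX
  have hY : I2 (auxMul q₁ q₂) cY cU = I2 q₁ cY cU + I2 q₂ cY cU :=
    I2_auxMul hq₁.1.2 hq₂.1.2 cY cY
  rw [hX, hY, hXY]
  rfl

end MIRegionMul

section MIRegionPi

variable {ι X Y U : Type}

def tripleArrowEquiv : (ι → X) × (ι → Y) × (ι → U) ≃ (ι → X × Y × U) where
  toFun a i := (a.1 i, a.2.1 i, a.2.2 i)
  invFun b := (fun i => (b i).1, fun i => (b i).2.1, fun i => (b i).2.2)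
  left_inv _ := rfl
  right_inv _ := rfl

variable [Fintype ι]

def auxPi (q : X × Y × U → ℝ) (a : (ι → X) × (ι → Y) × (ι → U)) : ℝ :=
  ∏ i, q (tripleArrowEquiv a i)

variable [DecidableEq ι] [Fintype X] [Fintype Y] [Fintype U]

lemma IsAux.pi {p : X × Y → ℝ} {q : X × Y × U → ℝ} (h : IsAux p q) :
    IsAux (fun a : (ι → X) × (ι → Y) => ∏ i, p (a.1 i, a.2 i)) (auxPi q) := by
  obtain ⟨⟨hq, hs⟩, hm⟩ := h
  refine ⟨⟨fun a => Finset.prod_nonneg fun i _ => hq _, ?_⟩, fun x y => ?_⟩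
  · calc ∑ a, auxPi q a = ∑ b : ι → X × Y × U, ∏ i, q (b i) :=
          tripleArrowEquiv.sum_comp fun b => ∏ i, q (b i)
      _ = ∏ _i : ι, ∑ c, q c := (Fintype.prod_sum fun _ c => q c).symm
      _ = 1 := by simp [hs]
  · calc ∑ u, auxPi q (x, y, u) = ∏ i, ∑ c, q (x i, y i, c) :=
          (Fintype.prod_sum fun i c => q (x i, y i, c)).symm
      _ = ∏ i, p (x i, y i) := Finset.prod_congr rfl fun i _ => hm (x i) (y i)

lemma I2_auxPi {q : X × Y × U → ℝ} (hq : ∑ a, q a = 1) {β : Type} [Fintype β]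
    (f : X × Y × U → β) :
    I2 (auxPi (ι := ι) q) (fun a i => f (tripleArrowEquiv a i)) cU
      = Fintype.card ι * I2 q f cU := by
  calc I2 (auxPi (ι := ι) q) (fun a i => f (tripleArrowEquiv a i)) cU = ∑ _i : ι, I2 q f cU := by
        rw [← I2_pi (fun _ => hq) (fun _ => f) (fun _ => cU),
          ← I2_comp_equiv _ _ _ tripleArrowEquiv]
        rfl
    _ = Fintype.card ι * I2 q f cU := by rw [Finset.sum_const, Finset.card_univ, nsmul_eq_mul]

lemma card_smul_mem_MIRegion_pi {p : X × Y → ℝ} {v : ℝ × ℝ × ℝ} (hv : v ∈ MIRegion p) :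
    (Fintype.card ι : ℝ) • v ∈ MIRegion (fun a : (ι → X) × (ι → Y) => ∏ i, p (a.1 i, a.2 i)) := by
  obtain ⟨U, _, q, hq, rfl⟩ := hv
  have hX : I2 (auxPi (ι := ι) q) cX cU = Fintype.card ι * I2 q cX cU := I2_auxPi hq.1.2 cX
  have hY : I2 (auxPi (ι := ι) q) cY cU = Fintype.card ι * I2 q cY cU := I2_auxPi hq.1.2 cY
  have hXY : I2 (auxPi (ι := ι) q) cXY cU = Fintype.card ι * I2 q cXY cU := by
    rw [← I2_auxPi hq.1.2, ← I2_comp_left_of_injective _ _ _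
      (Equiv.arrowProdEquivProdArrow ι (fun _ => X) (fun _ => Y)).injective]
    rfl
  refine ⟨ι → U, inferInstance, auxPi q, hq.pi, ?_⟩
  rw [hX, hY, hXY]
  rfl

end MIRegionPi

theorem stmt6_general {X₁ Y₁ X₂ Y₂ : Type} [Fintype X₁] [Fintype Y₁] [Fintype X₂] [Fintype Y₂]
    (p₁ : X₁ × Y₁ → ℝ) (p₂ : X₂ × Y₂ → ℝ)
    {X Y : Type} [Fintype X] [Fintype Y] (p : X × Y → ℝ)
    (n : ℕ) (hn : 0 < n) :
    MIRegion p₁ + MIRegion p₂ ⊆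
        MIRegion (fun a : (X₁ × X₂) × (Y₁ × Y₂) => p₁ (a.1.1, a.2.1) * p₂ (a.1.2, a.2.2)) ∧
    MIRegion p ⊆
        ((n : ℝ)⁻¹) • MIRegion (fun a : (Fin n → X) × (Fin n → Y) => ∏ i, p (a.1 i, a.2 i)) := by
  refine ⟨?_, fun v hv => ?_⟩
  · rintro _ ⟨v₁, hv₁, v₂, hv₂, rfl⟩
    exact add_mem_MIRegion_mul hv₁ hv₂
  · have hn' : (n : ℝ) ≠ 0 := by positivity
    have hnv := card_smul_mem_MIRegion_pi (ι := Fin n) hv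
    rw [Fintype.card_fin] at hnv
    rw [Set.mem_smul_set]
    exact ⟨(n : ℝ) • v, hnv, inv_smul_smul₀ hn' v⟩

/-- superadditivity of the mutual information region for independent pairs
(the joint pmf of `((X₁,X₂),(Y₁,Y₂))` is the product of the pmfs of `(X₁,Y₁)` and `(X₂,Y₂)`),
and the consequence `𝓘_{XY} ⊆ (1/n)·𝓘_{Xⁿ,Yⁿ}` for an i.i.d. source. -/
theorem stmt6 {X₁ Y₁ X₂ Y₂ : Type} [Fintype X₁] [Fintype Y₁] [Fintype X₂] [Fintype Y₂]
    (p₁ : X₁ × Y₁ → ℝ) (p₂ : X₂ × Y₂ → ℝ) (h₁ : IsPMF p₁) (h₂ : IsPMF p₂)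
    {X Y : Type} [Fintype X] [Fintype Y] (p : X × Y → ℝ) (hp : IsPMF p)
    (n : ℕ) (hn : 0 < n) :
    MIRegion p₁ + MIRegion p₂ ⊆
        MIRegion (fun a : (X₁ × X₂) × (Y₁ × Y₂) => p₁ (a.1.1, a.2.1) * p₂ (a.1.2, a.2.2)) ∧
    MIRegion p ⊆
        ((n : ℝ)⁻¹) • MIRegion (fun a : (Fin n → X) × (Fin n → Y) => ∏ i, p (a.1 i, a.2 i)) :=
  stmt6_general p₁ p₂ p n hn

end GW
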